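/- Let n ≥ 2, let U₁,…,Uₙ ⊆ ℂ be open, let fₖ, gₖ : Uₖ → ℂ (k = 1,…,n−1) and h : Uₙ → ℂ be differentiable, let z₀ := 0 and z₁,…,z_{n-1} ∈ ℂ, and let Fₖ, Gₖ : Uₖ → ℂ and H : Uₙ → ℂ be differentiable functions satisfying, for all t in their domains: Fₖ(t)² = zₖ + fₖ(t)² − z_{k-1}cos²(t); Fₖ′(t)² + Fₖ(t)²Gₖ′(t)² = fₖ′(t)² + fₖ(t)²gₖ′(t)² − z_{k-1}sin²(t); H′(t)² = h′(t)² − z_{n-1}sin²(t). Let Y be the map built from (f₁,…,f_{n-1}, g₁,…,g_{n-1}, h) and Ỹ the map built from (F₁,…,F_{n-1}, G₁,…,G_{n-1}, H). Then Y and Ỹ have the same first fundamental form: for every u ∈ U₁×⋯×Uₙ and all v, w ∈ ℂⁿ, ⟨DY(u)v, DY(u)w⟩ = ⟨DỸ(u)v, DỸ(u)w⟩. -/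

import Mathlib

noncomputable section

open Complex Finset

/-- Complex bilinear (non-Hermitian) dot product on ℂᵐ. -/
def cdot {m : ℕ} (x y : Fin m → ℂ) : ℂ := ∑ i, x i * y i

/-- `Cprod n k u = ∏_{j=k+1}^{n} cos(uʲ)` (zero-based: product of `cos (u j)` over `j ≥ k`). -/
def Cprod (n k : ℕ) (u : Fin n → ℂ) : ℂ :=
  ∏ j ∈ Finset.univ.filter (fun j : Fin n => k ≤ (j : ℕ)), Complex.cos (u j)

/-- With `n = m+1`, the map `Y : ℂⁿ → ℂ²ⁿ⁻¹` built from functions `f₁,…,f_{n-1}`,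
`g₁,…,g_{n-1}`, `h`:
`Y(u) = ∑_{k=1}^{n-1} Cₖ(u) fₖ(uᵏ)(cos(gₖ(uᵏ)) e_{2k-2} + sin(gₖ(uᵏ)) e_{2k-1}) + h(uⁿ) e_{2n-2}`. -/
def petY (m : ℕ) (f g : Fin m → ℂ → ℂ) (h : ℂ → ℂ) (u : Fin (m+1) → ℂ) :
    Fin (2*m+1) → ℂ :=
  fun i =>
    (∑ k : Fin m,
      Cprod (m+1) (k.val + 1) u * f k (u k.castSucc) *
        ((if (i : ℕ) = 2*k.val then 1 else 0) * Complex.cos (g k (u k.castSucc)) +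
         (if (i : ℕ) = 2*k.val + 1 then 1 else 0) * Complex.sin (g k (u k.castSucc))))
    + (if (i : ℕ) = 2*m then 1 else 0) * h (u (Fin.last m))

/-!
Along a line `t ↦ u + t • v` the `k`-th block of `Y` is a plane curve in polar form
`r (cos θ, sin θ)` with `r = Cₖ fₖ(uᵏ)` and `θ = gₖ(uᵏ)`, so `⟨DY v, DY w⟩` is the sum over `k` of
`dr(v) dr(w) + r² dθ(v) dθ(w)`, plus `h'² vⁿ wⁿ`. Expanding `dr = dCₖ fₖ + Cₖ fₖ' duᵏ`, the `k`-th
summand depends on `(fₖ, gₖ)` only through `fₖ²`, `fₖ fₖ'` and `fₖ'² + fₖ² gₖ'²`. The hypotheses,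
with the relation for `Fₖ Fₖ'` obtained by differentiating the one for `Fₖ²`, change these by
multiples of `z_{k-1}` and `zₖ`, and since `C_{k-1} = cos(uᵏ) Cₖ` the `k`-th summand changes by exactly
`zₖ dCₖ(v) dCₖ(w) - z_{k-1} dC_{k-1}(v) dC_{k-1}(w)`. The sum telescopes to
`z_{n-1} sin²(uⁿ) vⁿ wⁿ`, which the relation for `H` cancels.
-/

theorem Fin.sum_succ_sub_castSucc {M : Type*} [AddCommGroup M] {m : ℕ} (f : Fin (m + 1) → M) :
    ∑ i : Fin m, (f i.succ - f i.castSucc) = f (Fin.last m) - f 0 := by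
  induction m with
  | zero => simp
  | succ m ih =>
    simp only [Fin.sum_univ_castSucc, Fin.succ_castSucc, ih (fun i => f i.castSucc),
      Fin.succ_last, Fin.castSucc_zero]
    abel

theorem Fin.sum_ite_val_eq {M : Type*} [AddCommMonoid M] {N j : ℕ} (hj : j < N) (c : Fin N → M) :
    ∑ i : Fin N, (if (i : ℕ) = j then c i else 0) = c ⟨j, hj⟩ := by
  rw [Fintype.sum_eq_single ⟨j, hj⟩] <;> simp +contextual [Fin.ext_iff]

theorem mul_deriv_eq_of_sq_eq {U : Set ℂ} (hU : IsOpen U) {t : ℂ} (ht : t ∈ U) {F f : ℂ → ℂ}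
    (hF : DifferentiableAt ℂ F t) (hf : DifferentiableAt ℂ f t) {a b : ℂ}
    (hFf : ∀ s ∈ U, F s ^ 2 = a + f s ^ 2 - b * cos s ^ 2) :
    F t * deriv F t = f t * deriv f t + b * (cos t * sin t) := by
  have hderiv : deriv (fun s => F s ^ 2) t = deriv (fun s => a + f s ^ 2 - b * cos s ^ 2) t :=
    Filter.EventuallyEq.deriv_eq (Filter.eventuallyEq_of_mem (hU.mem_nhds ht) hFf)
  have hrhs :=
    ((hf.hasDerivAt.fun_pow 2).const_add a).fun_sub (((hasDerivAt_cos t).fun_pow 2).const_mul b)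
  rw [(hF.hasDerivAt.fun_pow 2).deriv, hrhs.deriv] at hderiv
  norm_num at hderiv
  linear_combination hderiv / 2

theorem hasDerivAt_comp_line_apply {ι : Type*} (u v : ι → ℂ) (i : ι) {φ : ℂ → ℂ}
    (hφ : DifferentiableAt ℂ φ (u i)) :
    HasDerivAt (fun t : ℂ => φ ((u + t • v) i)) (deriv φ (u i) * v i) 0 := by
  have hline : HasDerivAt (fun t : ℂ => (u + t • v) i) (v i) 0 := by
    simpa using ((hasDerivAt_id (0 : ℂ)).mul_const (v i)).const_add (u i)
  exact hφ.hasDerivAt.comp_of_eq 0 hline (by simp)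

section Cprod

theorem Cprod_eq_cos_mul {n : ℕ} (i : Fin n) (u : Fin n → ℂ) :
    Cprod n i u = cos (u i) * Cprod n (i + 1) u := by
  have hset : univ.filter (fun j : Fin n => (i : ℕ) ≤ j)
      = insert i (univ.filter (fun j : Fin n => (i : ℕ) + 1 ≤ j)) := by
    ext j
    simp only [mem_filter, mem_univ, true_and, mem_insert, Fin.ext_iff]
    omega
  rw [Cprod, hset, prod_insert (by simp), Cprod]

theorem Cprod_self (n : ℕ) (u : Fin n → ℂ) : Cprod n n u = 1 :=
  prod_eq_one fun j hj => absurd (mem_filter.1 hj).2 (not_le.2 j.isLt)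

theorem differentiable_Cprod (n k : ℕ) : Differentiable ℂ (Cprod n k) := by
  unfold Cprod
  fun_prop

theorem fderiv_Cprod_apply {n : ℕ} (i : Fin n) (u v : Fin n → ℂ) :
    fderiv ℂ (Cprod n i) u v
      = cos (u i) * fderiv ℂ (Cprod n (i + 1)) u v - sin (u i) * v i * Cprod n (i + 1) u := by
  rw [show Cprod n i = fun u => cos (u i) * Cprod n (i + 1) u from funext (Cprod_eq_cos_mul i),
    ((hasFDerivAt_apply i u).ccos.fun_mul (differentiable_Cprod n (i + 1) u).hasFDerivAt).fderiv]
  simp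
  ring

theorem fderiv_Cprod_self (n : ℕ) (u v : Fin n → ℂ) : fderiv ℂ (Cprod n n) u v = 0 := by
  simp [show Cprod n n = fun _ => 1 from funext (Cprod_self n)]

end Cprod

def interleave (m : ℕ) (x y : Fin m → ℂ) (z : ℂ) : Fin (2 * m + 1) → ℂ :=
  fun i => (∑ k : Fin m, ((if (i : ℕ) = 2 * k.val then 1 else 0) * x k
    + (if (i : ℕ) = 2 * k.val + 1 then 1 else 0) * y k)) + (if (i : ℕ) = 2 * m then 1 else 0) * z

section Interleave

variable {m : ℕ}

theorem interleave_even (x y : Fin m → ℂ) (z : ℂ) (k : Fin m) :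
    interleave m x y z ⟨2 * k, by omega⟩ = x k := by
  simp [interleave, Fin.val_inj, show ∀ a b : ℕ, 2 * a ≠ 2 * b + 1 by omega, k.isLt.ne]

theorem interleave_odd (x y : Fin m → ℂ) (z : ℂ) (k : Fin m) :
    interleave m x y z ⟨2 * k + 1, by omega⟩ = y k := by
  simp [interleave, Fin.val_inj, show ∀ a b : ℕ, 2 * a + 1 ≠ 2 * b by omega]

theorem interleave_last (x y : Fin m → ℂ) (z : ℂ) : interleave m x y z (Fin.last _) = z := by
  simp [interleave, show ∀ a b : ℕ, 2 * a ≠ 2 * b + 1 by omega, fun k : Fin m => k.isLt.ne']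

theorem cdot_interleave_left (x y : Fin m → ℂ) (z : ℂ) (w : Fin (2 * m + 1) → ℂ) :
    cdot (interleave m x y z) w
      = ∑ k : Fin m, (x k * w ⟨2 * k, by omega⟩ + y k * w ⟨2 * k + 1, by omega⟩)
        + z * w (Fin.last _) := by
  simp only [cdot, interleave, add_mul, sum_mul, ite_mul, one_mul, zero_mul, sum_add_distrib]
  simp only [sum_comm (γ := Fin (2 * m + 1))]
  simp (disch := omega) only [Fin.sum_ite_val_eq]
  rfl

theorem cdot_interleave (x y x' y' : Fin m → ℂ) (z z' : ℂ) :
    cdot (interleave m x y z) (interleave m x' y' z')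
      = ∑ k : Fin m, (x k * x' k + y k * y' k) + z * z' := by
  simp only [cdot_interleave_left, interleave_even, interleave_odd, interleave_last]

theorem hasDerivAt_interleave {x y : Fin m → ℂ → ℂ} {z : ℂ → ℂ} {x' y' : Fin m → ℂ}
    {z' t : ℂ} (hx : ∀ k, HasDerivAt (x k) (x' k) t) (hy : ∀ k, HasDerivAt (y k) (y' k) t)
    (hz : HasDerivAt z z' t) :
    HasDerivAt (fun s => interleave m (fun k => x k s) (fun k => y k s) (z s))
      (interleave m x' y' z') t :=
  hasDerivAt_pi.2 fun _ =>
    (HasDerivAt.fun_sum fun k _ => ((hx k).const_mul _).add ((hy k).const_mul _)).add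
      (hz.const_mul _)

theorem hasDerivAt_interleave_polar {r θ : Fin m → ℂ → ℂ} {z : ℂ → ℂ}
    {r' θ' : Fin m → ℂ} {z' t : ℂ} (hr : ∀ k, HasDerivAt (r k) (r' k) t)
    (hθ : ∀ k, HasDerivAt (θ k) (θ' k) t) (hz : HasDerivAt z z' t) :
    HasDerivAt
      (fun s => interleave m (fun k => r k s * cos (θ k s)) (fun k => r k s * sin (θ k s)) (z s))
      (interleave m (fun k => r' k * cos (θ k t) - r k t * θ' k * sin (θ k t))
        (fun k => r' k * sin (θ k t) + r k t * θ' k * cos (θ k t)) z') t := by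
  refine hasDerivAt_interleave (fun k => ?_) (fun k => ?_) hz
  · exact ((hr k).fun_mul (hθ k).ccos).congr_deriv (by ring)
  · exact ((hr k).fun_mul (hθ k).csin).congr_deriv (by ring)

theorem cdot_interleave_polar (r θ r' θ' r'' θ'' : Fin m → ℂ) (z' z'' : ℂ) :
    cdot (interleave m (fun k => r' k * cos (θ k) - r k * θ' k * sin (θ k))
        (fun k => r' k * sin (θ k) + r k * θ' k * cos (θ k)) z')
      (interleave m (fun k => r'' k * cos (θ k) - r k * θ'' k * sin (θ k))
        (fun k => r'' k * sin (θ k) + r k * θ'' k * cos (θ k)) z'')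
      = ∑ k : Fin m, (r' k * r'' k + r k ^ 2 * (θ' k * θ'' k)) + z' * z'' := by
  rw [cdot_interleave]
  congr 1
  refine sum_congr rfl fun k _ => ?_
  linear_combination (r' k * r'' k + r k ^ 2 * (θ' k * θ'' k)) * sin_sq_add_cos_sq (θ k)

end Interleave

section Peterson

variable {m : ℕ} {f g : Fin m → ℂ → ℂ} {h : ℂ → ℂ} {u : Fin (m + 1) → ℂ}

def petBlock (f g : Fin m → ℂ → ℂ) (u v w : Fin (m + 1) → ℂ) (k : Fin m) : ℂ :=
  f k (u k.castSucc) ^ 2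
      * (fderiv ℂ (Cprod (m + 1) (k + 1)) u v * fderiv ℂ (Cprod (m + 1) (k + 1)) u w)
    + Cprod (m + 1) (k + 1) u * (f k (u k.castSucc) * deriv (f k) (u k.castSucc))
      * (fderiv ℂ (Cprod (m + 1) (k + 1)) u v * w k.castSucc
        + fderiv ℂ (Cprod (m + 1) (k + 1)) u w * v k.castSucc)
    + Cprod (m + 1) (k + 1) u ^ 2
      * (deriv (f k) (u k.castSucc) ^ 2 + f k (u k.castSucc) ^ 2 * deriv (g k) (u k.castSucc) ^ 2)
      * (v k.castSucc * w k.castSucc)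

def petFirstForm (f g : Fin m → ℂ → ℂ) (h : ℂ → ℂ) (u v w : Fin (m + 1) → ℂ) : ℂ :=
  ∑ k, petBlock f g u v w k + deriv h (u (Fin.last m)) ^ 2 * (v (Fin.last m) * w (Fin.last m))

theorem petY_eq_interleave (u : Fin (m + 1) → ℂ) :
    petY m f g h u = interleave m
      (fun k => Cprod (m + 1) (k + 1) u * f k (u k.castSucc) * cos (g k (u k.castSucc)))
      (fun k => Cprod (m + 1) (k + 1) u * f k (u k.castSucc) * sin (g k (u k.castSucc)))
      (h (u (Fin.last m))) := by
  funext i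
  simp only [petY, interleave]
  congr 1
  exact sum_congr rfl fun k _ => by ring

theorem differentiableAt_petY (hf : ∀ k, DifferentiableAt ℂ (f k) (u k.castSucc))
    (hg : ∀ k, DifferentiableAt ℂ (g k) (u k.castSucc))
    (hh : DifferentiableAt ℂ h (u (Fin.last m))) :
    DifferentiableAt ℂ (petY m f g h) u := by
  have := differentiable_Cprod
  refine differentiableAt_pi.2 fun i => ?_
  unfold petY
  fun_prop

theorem cdot_fderiv_petY (hf : ∀ k, DifferentiableAt ℂ (f k) (u k.castSucc))
    (hg : ∀ k, DifferentiableAt ℂ (g k) (u k.castSucc))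
    (hh : DifferentiableAt ℂ h (u (Fin.last m))) (v w : Fin (m + 1) → ℂ) :
    cdot (fderiv ℂ (petY m f g h) u v) (fderiv ℂ (petY m f g h) u w)
      = petFirstForm f g h u v w := by
  have hline (v : Fin (m + 1) → ℂ) := hasDerivAt_interleave_polar
    (fun k => HasDerivAt.fun_mul
      ((differentiable_Cprod (m + 1) (k + 1) u).hasFDerivAt.hasLineDerivAt v)
      (hasDerivAt_comp_line_apply u v k.castSucc (hf k)))
    (fun k => hasDerivAt_comp_line_apply u v k.castSucc (hg k))
    (hasDerivAt_comp_line_apply u v (Fin.last m) hh)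
  simp only [← petY_eq_interleave, zero_smul, add_zero] at hline
  have hY := differentiableAt_petY hf hg hh
  rw [← hY.lineDeriv_eq_fderiv, ← hY.lineDeriv_eq_fderiv, HasLineDerivAt.lineDeriv (hline v),
    HasLineDerivAt.lineDeriv (hline w), cdot_interleave_polar, petFirstForm]
  exact congrArg₂ _ (sum_congr rfl fun k _ => by rw [petBlock]; ring) (by ring)

theorem petFirstForm_eq {F G : Fin m → ℂ → ℂ} {H : ℂ → ℂ} {Z : Fin (m + 1) → ℂ} (hZ0 : Z 0 = 0)
    (hF : ∀ k : Fin m, F k (u k.castSucc) ^ 2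
      = Z k.succ + f k (u k.castSucc) ^ 2 - Z k.castSucc * cos (u k.castSucc) ^ 2)
    (hFF' : ∀ k : Fin m, F k (u k.castSucc) * deriv (F k) (u k.castSucc)
      = f k (u k.castSucc) * deriv (f k) (u k.castSucc)
        + Z k.castSucc * (cos (u k.castSucc) * sin (u k.castSucc)))
    (hG : ∀ k : Fin m, deriv (F k) (u k.castSucc) ^ 2
        + F k (u k.castSucc) ^ 2 * deriv (G k) (u k.castSucc) ^ 2
      = deriv (f k) (u k.castSucc) ^ 2 + f k (u k.castSucc) ^ 2 * deriv (g k) (u k.castSucc) ^ 2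
        - Z k.castSucc * sin (u k.castSucc) ^ 2)
    (hH : deriv H (u (Fin.last m)) ^ 2
      = deriv h (u (Fin.last m)) ^ 2 - Z (Fin.last m) * sin (u (Fin.last m)) ^ 2)
    (v w : Fin (m + 1) → ℂ) :
    petFirstForm F G H u v w = petFirstForm f g h u v w := by
  set W : Fin (m + 1) → ℂ := fun j =>
    Z j * (fderiv ℂ (Cprod (m + 1) j) u v * fderiv ℂ (Cprod (m + 1) j) u w) with hW
  have hblock (k : Fin m) :
      petBlock F G u v w k = petBlock f g u v w k + (W k.succ - W k.castSucc) := by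
    simp only [petBlock, hW]
    rw [fderiv_Cprod_apply k.castSucc u v, fderiv_Cprod_apply k.castSucc u w]
    simp only [Fin.val_succ, Fin.val_castSucc]
    linear_combination
      (fderiv ℂ (Cprod (m + 1) (k + 1)) u v * fderiv ℂ (Cprod (m + 1) (k + 1)) u w) * hF k
        + Cprod (m + 1) (k + 1) u * (fderiv ℂ (Cprod (m + 1) (k + 1)) u v * w k.castSucc
          + fderiv ℂ (Cprod (m + 1) (k + 1)) u w * v k.castSucc) * hFF' k
        + Cprod (m + 1) (k + 1) u ^ 2 * (v k.castSucc * w k.castSucc) * hG k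
  have hW0 : W 0 = 0 := by simp [hW, hZ0]
  have hWlast : W (Fin.last m)
      = Z (Fin.last m) * sin (u (Fin.last m)) ^ 2 * (v (Fin.last m) * w (Fin.last m)) := by
    simp only [hW]
    rw [fderiv_Cprod_apply (Fin.last m) u v, fderiv_Cprod_apply (Fin.last m) u w]
    simp only [Fin.val_last, fderiv_Cprod_self, Cprod_self]
    ring
  rw [petFirstForm, petFirstForm, sum_congr rfl fun k _ => hblock k, sum_add_distrib,
    Fin.sum_succ_sub_castSucc, hW0, hWlast, hH]
  ring

end Peterson

theorem stmt7_general (m : ℕ)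
    (U : Fin (m+1) → Set ℂ) (hU : ∀ k, IsOpen (U k))
    (f g F G : Fin m → ℂ → ℂ) (h H : ℂ → ℂ)
    (hf : ∀ k : Fin m, DifferentiableOn ℂ (f k) (U k.castSucc))
    (hg : ∀ k : Fin m, DifferentiableOn ℂ (g k) (U k.castSucc))
    (hh : DifferentiableOn ℂ h (U (Fin.last m)))
    (hF : ∀ k : Fin m, DifferentiableOn ℂ (F k) (U k.castSucc))
    (hG : ∀ k : Fin m, DifferentiableOn ℂ (G k) (U k.castSucc))
    (hH : DifferentiableOn ℂ H (U (Fin.last m)))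
    (Z : Fin (m+1) → ℂ) (hZ0 : Z 0 = 0)
    (heqF : ∀ k : Fin m, ∀ t ∈ U k.castSucc,
      (F k t)^2 = Z k.succ + (f k t)^2 - Z k.castSucc * (Complex.cos t)^2)
    (heqG : ∀ k : Fin m, ∀ t ∈ U k.castSucc,
      (deriv (F k) t)^2 + (F k t)^2 * (deriv (G k) t)^2
        = (deriv (f k) t)^2 + (f k t)^2 * (deriv (g k) t)^2
          - Z k.castSucc * (Complex.sin t)^2)
    (heqH : ∀ t ∈ U (Fin.last m),
      (deriv H t)^2 = (deriv h t)^2 - Z (Fin.last m) * (Complex.sin t)^2) :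
    ∀ u : Fin (m+1) → ℂ, (∀ k, u k ∈ U k) →
      ∀ v w : Fin (m+1) → ℂ,
        cdot (fderiv ℂ (petY m f g h) u v) (fderiv ℂ (petY m f g h) u w)
          = cdot (fderiv ℂ (petY m F G H) u v) (fderiv ℂ (petY m F G H) u w) := by
  intro u hu v w
  have hat {φ : ℂ → ℂ} {i : Fin (m + 1)} (hφ : DifferentiableOn ℂ φ (U i)) :
      DifferentiableAt ℂ φ (u i) :=
    hφ.differentiableAt ((hU i).mem_nhds (hu i))
  rw [cdot_fderiv_petY (fun k => hat (hf k)) (fun k => hat (hg k)) (hat hh),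
    cdot_fderiv_petY (fun k => hat (hF k)) (fun k => hat (hG k)) (hat hH)]
  have hFF' (k : Fin m) := mul_deriv_eq_of_sq_eq (hU _) (hu _) (hat (hF k)) (hat (hf k)) (heqF k)
  exact (petFirstForm_eq hZ0 (fun k => heqF k _ (hu _)) hFF' (fun k => heqG k _ (hu _))
    (heqH _ (hu _)) v w).symm

/-- the general `(n−1)`-parameter Peterson family (here `n = m+1 ≥ 2`):
with `z₀ := 0` and the stated relations between `(F, G, H)` and `(f, g, h)`,
the maps `Y` and `Ỹ` have the same first fundamental form. -/
theorem stmt7 (m : ℕ) (hm : 1 ≤ m)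
    (U : Fin (m+1) → Set ℂ) (hU : ∀ k, IsOpen (U k))
    (f g F G : Fin m → ℂ → ℂ) (h H : ℂ → ℂ)
    (hf : ∀ k : Fin m, DifferentiableOn ℂ (f k) (U k.castSucc))
    (hg : ∀ k : Fin m, DifferentiableOn ℂ (g k) (U k.castSucc))
    (hh : DifferentiableOn ℂ h (U (Fin.last m)))
    (hF : ∀ k : Fin m, DifferentiableOn ℂ (F k) (U k.castSucc))
    (hG : ∀ k : Fin m, DifferentiableOn ℂ (G k) (U k.castSucc))
    (hH : DifferentiableOn ℂ H (U (Fin.last m)))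
    (z : Fin m → ℂ)
    (Z : Fin (m+1) → ℂ) (hZ0 : Z 0 = 0) (hZs : ∀ k : Fin m, Z k.succ = z k)
    (heqF : ∀ k : Fin m, ∀ t ∈ U k.castSucc,
      (F k t)^2 = Z k.succ + (f k t)^2 - Z k.castSucc * (Complex.cos t)^2)
    (heqG : ∀ k : Fin m, ∀ t ∈ U k.castSucc,
      (deriv (F k) t)^2 + (F k t)^2 * (deriv (G k) t)^2
        = (deriv (f k) t)^2 + (f k t)^2 * (deriv (g k) t)^2
          - Z k.castSucc * (Complex.sin t)^2)
    (heqH : ∀ t ∈ U (Fin.last m),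
      (deriv H t)^2 = (deriv h t)^2 - Z (Fin.last m) * (Complex.sin t)^2) :
    ∀ u : Fin (m+1) → ℂ, (∀ k, u k ∈ U k) →
      ∀ v w : Fin (m+1) → ℂ,
        cdot (fderiv ℂ (petY m f g h) u v) (fderiv ℂ (petY m f g h) u w)
          = cdot (fderiv ℂ (petY m F G H) u v) (fderiv ℂ (petY m F G H) u w) :=
  stmt7_general m U hU f g F G h H hf hg hh hF hG hH Z hZ0 heqF heqG heqH
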